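/- For any bounded linear operators T_1,…,T_n on a complex Hilbert space H, the euclidean operator radius satisfies w_e(T_1,…,T_n) = sup_{(λ_1,…,λ_n)∈𝔹_n} ω(λ_1T_1 + ⋯ + λ_nT_n), where ω is the classical numerical radius and 𝔹_n is the open unit ball of ℂ^n; consequently (1/2)·‖(T_1,…,T_n)‖_e ≤ w_e(T_1,…,T_n) ≤ ‖(T_1,…,T_n)‖_e. -/

import Mathlib

noncomputable section

/-- The euclidean operator radius of a tuple of operators:
`w_e(T) = sup_{‖h‖=1} (∑_i |⟨T_i h, h⟩|²)^{1/2}`. -/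
def euclidRad {H : Type*} [NormedAddCommGroup H] [InnerProductSpace ℂ H]
    {ι : Type*} [Fintype ι] (T : ι → H →L[ℂ] H) : ℝ :=
  sSup {x : ℝ | ∃ h : H, ‖h‖ = 1 ∧
    x = Real.sqrt (∑ j : ι, ‖(inner ℂ ((T j) h) h : ℂ)‖ ^ 2)}

/-- The euclidean operator norm of a tuple of operators:
`‖(T_i)‖_e = sup ‖∑ λ_i T_i‖` over `(λ_i)` in the open unit ball of `ℂⁿ`. -/
def euclidNorm {H : Type*} [NormedAddCommGroup H] [InnerProductSpace ℂ H]
    {ι : Type*} [Fintype ι] (T : ι → H →L[ℂ] H) : ℝ :=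
  sSup {x : ℝ | ∃ l : ι → ℂ, (∑ j : ι, ‖l j‖ ^ 2) < 1 ∧ x = ‖∑ j : ι, l j • T j‖}

/-- The (classical) numerical radius of a bounded operator. -/
def numRad {H : Type*} [NormedAddCommGroup H] [InnerProductSpace ℂ H]
    (X : H →L[ℂ] H) : ℝ :=
  sSup {x : ℝ | ∃ h : H, ‖h‖ = 1 ∧ x = ‖(inner ℂ (X h) h : ℂ)‖}

section Aux

open Finset ComplexConjugate

variable {H : Type*} [NormedAddCommGroup H] [InnerProductSpace ℂ H]

local notation "⟪" x ", " y "⟫" => @inner ℂ _ _ x y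

/-- Helper: if `r * c ≤ S` for all `0 ≤ r < 1` then `c ≤ S`. -/
lemma aux_le_of_forall_mul {c S : ℝ} (hc : 0 ≤ c)
    (h : ∀ r : ℝ, 0 ≤ r → r < 1 → r * c ≤ S) : c ≤ S := by
  have hS : 0 ≤ S := by simpa using h 0 le_rfl one_pos
  by_contra hlt
  push_neg at hlt
  have hc0 : 0 < c := lt_of_le_of_lt hS hlt
  have hr0 : 0 ≤ (S + c) / (2 * c) := by positivity
  have hr1 : (S + c) / (2 * c) < 1 := by
    rw [div_lt_one (by positivity)]; linarith
  have hmain := h _ hr0 hr1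
  have he : (S + c) / (2 * c) * c = (S + c) / 2 := by
    field_simp
  rw [he] at hmain
  linarith

/-- Cauchy–Schwarz for finite complex sequences. -/
lemma aux_cs {ι : Type*} [Fintype ι] (l a : ι → ℂ) :
    ‖∑ i, l i * a i‖ ≤
      Real.sqrt (∑ i, ‖l i‖ ^ 2) * Real.sqrt (∑ i, ‖a i‖ ^ 2) := by
  have h1 : ‖∑ i, l i * a i‖ ≤ ∑ i, ‖l i‖ * ‖a i‖ := by
    refine le_trans (norm_sum_le _ _) (le_of_eq ?_)
    simp [norm_mul]
  refine h1.trans ?_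
  rw [← Real.sqrt_mul (by positivity)]
  rw [Real.le_sqrt (by positivity) (by positivity)]
  exact sum_mul_sq_le_sq_mul_sq Finset.univ (fun i => ‖l i‖) (fun i => ‖a i‖)

lemma aux_inner_le_norm (X : H →L[ℂ] H) {h : H} (hh : ‖h‖ = 1) :
    ‖⟪X h, h⟫‖ ≤ ‖X‖ := by
  calc ‖⟪X h, h⟫‖ ≤ ‖X h‖ * ‖h‖ := norm_inner_le_norm _ _
    _ ≤ (‖X‖ * ‖h‖) * ‖h‖ := by
        have := X.le_opNorm h
        nlinarith [norm_nonneg h]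
    _ = ‖X‖ := by rw [hh]; ring

lemma aux_numRad_bdd (X : H →L[ℂ] H) :
    BddAbove {x : ℝ | ∃ h : H, ‖h‖ = 1 ∧ x = ‖(⟪X h, h⟫ : ℂ)‖} := by
  refine ⟨‖X‖, fun x hx => ?_⟩
  obtain ⟨h, hh, rfl⟩ := hx
  exact aux_inner_le_norm X hh

lemma aux_numRad_nonneg (X : H →L[ℂ] H) : 0 ≤ numRad X := by
  refine Real.sSup_nonneg fun x hx => ?_
  obtain ⟨h, hh, rfl⟩ := hx
  exact norm_nonneg _

lemma aux_numRad_le_norm (X : H →L[ℂ] H) : numRad X ≤ ‖X‖ := by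
  refine Real.sSup_le (fun x hx => ?_) (norm_nonneg X)
  obtain ⟨h, hh, rfl⟩ := hx
  exact aux_inner_le_norm X hh

lemma aux_inner_le_numRad (X : H →L[ℂ] H) (h : H) :
    ‖⟪X h, h⟫‖ ≤ numRad X * ‖h‖ ^ 2 := by
  rcases eq_or_ne h 0 with rfl | hne
  · simp
  · have hn : (0:ℝ) < ‖h‖ := norm_pos_iff.mpr hne
    set c : ℂ := ((‖h‖⁻¹ : ℝ) : ℂ) with hc
    set u : H := c • h with hu
    have hcn : ‖c‖ = ‖h‖⁻¹ := by
      rw [hc, Complex.norm_real, Real.norm_eq_abs, abs_of_pos (by positivity)]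
    have hun : ‖u‖ = 1 := by
      rw [hu, norm_smul, hcn, inv_mul_cancel₀ (ne_of_gt hn)]
    have hXu : X u = c • X h := by rw [hu, map_smul]
    have hval : ⟪X u, u⟫ = conj c * c * ⟪X h, h⟫ := by
      rw [hXu, hu, inner_smul_left, inner_smul_right]; ring
    have hnval : ‖⟪X u, u⟫‖ = ‖h‖⁻¹ * ‖h‖⁻¹ * ‖⟪X h, h⟫‖ := by
      rw [hval, norm_mul, norm_mul, RCLike.norm_conj, hcn]
    have hle : ‖⟪X u, u⟫‖ ≤ numRad X :=
      le_csSup (aux_numRad_bdd X) ⟨u, hun, rfl⟩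
    rw [hnval] at hle
    have h2 : ‖⟪X h, h⟫‖ = (‖h‖ * ‖h‖) * (‖h‖⁻¹ * ‖h‖⁻¹ * ‖⟪X h, h⟫‖) := by
      field_simp
    rw [h2, pow_two]
    nlinarith [norm_nonneg (⟪X h, h⟫ : ℂ)]

lemma aux_polar (X : H →L[ℂ] H) (x y : H) :
    ‖⟪X y, x⟫‖ ≤ numRad X * (‖x‖ ^ 2 + ‖y‖ ^ 2) := by
  have hp := inner_map_polarization (X : H →ₗ[ℂ] H) x y
  simp only [ContinuousLinearMap.coe_coe] at hp
  set w := numRad X with hw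
  have hb : ∀ z : H, ‖⟪X z, z⟫‖ ≤ w * ‖z‖ ^ 2 := fun z => aux_inner_le_numRad X z
  have hIy : ‖Complex.I • y‖ = ‖y‖ := by
    rw [norm_smul, Complex.norm_I, one_mul]
  have par1 := parallelogram_law_with_norm ℂ x y
  have par2 := parallelogram_law_with_norm ℂ x (Complex.I • y)
  have h1 := hb (x + y)
  have h2 := hb (x - y)
  have h3 := hb (x + Complex.I • y)
  have h4 := hb (x - Complex.I • y)
  have hbig : ‖⟪X y, x⟫‖ ≤ (‖⟪X (x + y), x + y⟫‖ + ‖⟪X (x - y), x - y⟫‖ +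
      ‖⟪X (x + Complex.I • y), x + Complex.I • y⟫‖ +
      ‖⟪X (x - Complex.I • y), x - Complex.I • y⟫‖) / 4 := by
    rw [hp]
    rw [norm_div]
    simp only [Complex.norm_ofNat]
    gcongr
    refine le_trans (norm_sub_le _ _) ?_
    have e1 : ‖Complex.I * ⟪X (x - Complex.I • y), x - Complex.I • y⟫‖ =
        ‖⟪X (x - Complex.I • y), x - Complex.I • y⟫‖ := by
      rw [norm_mul, Complex.norm_I, one_mul]
    rw [e1]
    gcongr
    refine le_trans (norm_add_le _ _) ?_
    have e2 : ‖Complex.I * ⟪X (x + Complex.I • y), x + Complex.I • y⟫‖ =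
        ‖⟪X (x + Complex.I • y), x + Complex.I • y⟫‖ := by
      rw [norm_mul, Complex.norm_I, one_mul]
    rw [e2]
    gcongr
    exact norm_sub_le _ _
  have hw0 : 0 ≤ w := aux_numRad_nonneg X
  rw [hIy] at par2
  have par1' : ‖x + y‖ ^ 2 + ‖x - y‖ ^ 2 = 2 * (‖x‖ ^ 2 + ‖y‖ ^ 2) := by
    simpa only [pow_two] using par1
  have par2' : ‖x + Complex.I • y‖ ^ 2 + ‖x - Complex.I • y‖ ^ 2
      = 2 * (‖x‖ ^ 2 + ‖y‖ ^ 2) := by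
    simpa only [pow_two] using par2
  refine hbig.trans ?_
  nlinarith [h1, h2, h3, h4, par1', par2', hw0]

lemma aux_norm_le_two_numRad (X : H →L[ℂ] H) : ‖X‖ ≤ 2 * numRad X := by
  refine X.opNorm_le_bound (by linarith [aux_numRad_nonneg X]) fun y => ?_
  rcases eq_or_ne (X y) 0 with h0 | h0
  · rw [h0, norm_zero]
    have := aux_numRad_nonneg X
    positivity
  · have hXy : (0:ℝ) < ‖X y‖ := norm_pos_iff.mpr h0
    set c : ℂ := ((‖y‖ * ‖X y‖⁻¹ : ℝ) : ℂ) with hc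
    set x : H := c • X y with hx
    have hxnorm : ‖x‖ = ‖y‖ := by
      rw [hx, norm_smul, hc, Complex.norm_real, Real.norm_eq_abs,
        abs_of_nonneg (by positivity)]
      field_simp
    have hval : ⟪X y, x⟫ = ((‖y‖ * ‖X y‖ : ℝ) : ℂ) := by
      rw [hx, inner_smul_right, hc, @inner_self_eq_norm_sq_to_K ℂ]
      push_cast
      have : (‖X y‖ : ℂ) ≠ 0 := by
        simpa using ne_of_gt hXy
      field_simp
      rfl
    have hnval : ‖⟪X y, x⟫‖ = ‖y‖ * ‖X y‖ := by
      rw [hval, Complex.norm_real, Real.norm_eq_abs, abs_of_nonneg (by positivity)]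
    have := aux_polar X x y
    rw [hnval, hxnorm] at this
    -- ‖y‖ * ‖X y‖ ≤ w * (‖y‖^2 + ‖y‖^2)
    rcases eq_or_lt_of_le (norm_nonneg y) with hy0 | hy0
    · have : y = 0 := norm_eq_zero.mp hy0.symm
      rw [this, map_zero] at h0; exact absurd rfl h0
    · have hw0 : 0 ≤ numRad X := aux_numRad_nonneg X
      nlinarith

/-- For a unit vector producing coefficients `a`, and any `0 ≤ r < 1`, there is a
point of the open unit ball nearly attaining the Cauchy–Schwarz bound. -/
lemma aux_attain {ι : Type*} [Fintype ι] (a : ι → ℂ) {r : ℝ}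
    (hr0 : 0 ≤ r) (hr1 : r < 1) :
    ∃ l : ι → ℂ, (∑ i, ‖l i‖ ^ 2) < 1 ∧
      ‖∑ i, conj (l i) * a i‖ = r * Real.sqrt (∑ i, ‖a i‖ ^ 2) := by
  set S : ℝ := Real.sqrt (∑ i, ‖a i‖ ^ 2) with hS
  have hsum0 : (0:ℝ) ≤ ∑ i, ‖a i‖ ^ 2 := by positivity
  have hS0 : 0 ≤ S := Real.sqrt_nonneg _
  have hS2 : S ^ 2 = ∑ i, ‖a i‖ ^ 2 := Real.sq_sqrt hsum0
  rcases eq_or_lt_of_le hS0 with hSz | hSpos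
  · refine ⟨fun _ => 0, by simpa using zero_lt_one, ?_⟩
    rw [← hSz, mul_zero]
    simp
  · set c : ℝ := r / S with hc
    have hc0 : 0 ≤ c := div_nonneg hr0 hS0
    refine ⟨fun i => (c : ℂ) * a i, ?_, ?_⟩
    · have : ∀ i, ‖(c : ℂ) * a i‖ ^ 2 = c ^ 2 * ‖a i‖ ^ 2 := by
        intro i
        rw [norm_mul, Complex.norm_real, Real.norm_eq_abs, abs_of_nonneg hc0, mul_pow]
      rw [Finset.sum_congr rfl (fun i _ => this i), ← Finset.mul_sum, ← hS2, hc]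
      have : (r / S) ^ 2 * S ^ 2 = r ^ 2 := by
        field_simp
      rw [this]
      nlinarith
    · have hterm : ∀ i, conj ((c : ℂ) * a i) * a i = (c : ℂ) * ((‖a i‖ ^ 2 : ℝ) : ℂ) := by
        intro i
        rw [map_mul, Complex.conj_ofReal]
        have : conj (a i) * a i = ((‖a i‖ ^ 2 : ℝ) : ℂ) := by
          rw [← Complex.normSq_eq_norm_sq, Complex.normSq_eq_conj_mul_self]
        rw [mul_assoc, this]
      rw [Finset.sum_congr rfl (fun i _ => hterm i), ← Finset.mul_sum]
      have hcast : (∑ i, ((‖a i‖ ^ 2 : ℝ) : ℂ)) = ((∑ i, ‖a i‖ ^ 2 : ℝ) : ℂ) := by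
        norm_cast
      rw [hcast, ← hS2]
      have : (c : ℂ) * ((S ^ 2 : ℝ) : ℂ) = ((r * S : ℝ) : ℂ) := by
        have hSne : (S : ℂ) ≠ 0 := Complex.ofReal_ne_zero.mpr (ne_of_gt hSpos)
        rw [hc]
        push_cast
        field_simp
      rw [this, Complex.norm_real, Real.norm_eq_abs, abs_of_nonneg (mul_nonneg hr0 hS0)]

/-- The inner product of `(∑ l i • T i) h` with `h`. -/
lemma aux_inner_sum {ι : Type*} [Fintype ι] (T : ι → H →L[ℂ] H) (l : ι → ℂ) (h : H) :
    ⟪(∑ i, l i • T i) h, h⟫ = ∑ i, conj (l i) * ⟪T i h, h⟫ := by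
  rw [ContinuousLinearMap.sum_apply, sum_inner]
  refine Finset.sum_congr rfl fun i _ => ?_
  rw [ContinuousLinearMap.smul_apply, inner_smul_left]

lemma aux_coeff_le_one {ι : Type*} [Fintype ι] {l : ι → ℂ}
    (hl : (∑ i, ‖l i‖ ^ 2) < 1) (i : ι) : ‖l i‖ ≤ 1 := by
  have h1 : ‖l i‖ ^ 2 ≤ ∑ j, ‖l j‖ ^ 2 :=
    Finset.single_le_sum (fun j _ => sq_nonneg (‖l j‖)) (Finset.mem_univ i)
  nlinarith [norm_nonneg (l i)]

lemma aux_norm_sum_le {ι : Type*} [Fintype ι] (T : ι → H →L[ℂ] H) {l : ι → ℂ}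
    (hl : (∑ i, ‖l i‖ ^ 2) < 1) : ‖∑ i, l i • T i‖ ≤ ∑ i, ‖T i‖ := by
  refine le_trans (norm_sum_le _ _) (Finset.sum_le_sum fun i _ => ?_)
  calc ‖l i • T i‖ ≤ ‖l i‖ * ‖T i‖ := ContinuousLinearMap.opNorm_smul_le _ _
    _ ≤ 1 * ‖T i‖ :=
        mul_le_mul_of_nonneg_right (aux_coeff_le_one hl i) (norm_nonneg _)
    _ = ‖T i‖ := one_mul _

end Aux

open ComplexConjugate in
/-- `w_e(T_1,…,T_n) = sup_{λ ∈ 𝔹_n} ω(λ_1 T_1 + ⋯ + λ_n T_n)`, and consequently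
`(1/2)·‖(T_1,…,T_n)‖_e ≤ w_e(T_1,…,T_n) ≤ ‖(T_1,…,T_n)‖_e`. -/
theorem euclidRad_eq_sup_numRad {H : Type*} [NormedAddCommGroup H]
    [InnerProductSpace ℂ H] {n : ℕ} (T : Fin n → H →L[ℂ] H) :
    euclidRad T =
      sSup {x : ℝ | ∃ l : Fin n → ℂ, (∑ i, ‖l i‖ ^ 2) < 1 ∧
        x = numRad (∑ i, l i • T i)} ∧
    (1 / 2) * euclidNorm T ≤ euclidRad T ∧ euclidRad T ≤ euclidNorm T := by
  classical
  set A : Set ℝ := {x : ℝ | ∃ h : H, ‖h‖ = 1 ∧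
    x = Real.sqrt (∑ j, ‖(inner ℂ ((T j) h) h : ℂ)‖ ^ 2)} with hA
  set B : Set ℝ := {x : ℝ | ∃ l : Fin n → ℂ, (∑ i, ‖l i‖ ^ 2) < 1 ∧
    x = numRad (∑ i, l i • T i)} with hB
  set C : Set ℝ := {x : ℝ | ∃ l : Fin n → ℂ, (∑ j, ‖l j‖ ^ 2) < 1 ∧
    x = ‖∑ j, l j • T j‖} with hC
  have hRad : euclidRad T = sSup A := rfl
  have hNorm : euclidNorm T = sSup C := rfl
  -- boundedness
  have bddA : BddAbove A := by
    refine ⟨Real.sqrt (∑ j, ‖T j‖ ^ 2), fun x hx => ?_⟩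
    obtain ⟨h, hh, rfl⟩ := hx
    refine Real.sqrt_le_sqrt (Finset.sum_le_sum fun j _ => ?_)
    have := aux_inner_le_norm (T j) hh
    have h0 : (0:ℝ) ≤ ‖(inner ℂ ((T j) h) h : ℂ)‖ := norm_nonneg _
    nlinarith
  have bddB : BddAbove B := by
    refine ⟨∑ j, ‖T j‖, fun x hx => ?_⟩
    obtain ⟨l, hl, rfl⟩ := hx
    exact (aux_numRad_le_norm _).trans (aux_norm_sum_le T hl)
  have bddC : BddAbove C := by
    refine ⟨∑ j, ‖T j‖, fun x hx => ?_⟩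
    obtain ⟨l, hl, rfl⟩ := hx
    exact aux_norm_sum_le T hl
  -- nonnegativity of suprema
  have hA0 : 0 ≤ sSup A := Real.sSup_nonneg fun x hx => by
    obtain ⟨h, hh, rfl⟩ := hx; exact Real.sqrt_nonneg _
  have hB0 : 0 ≤ sSup B := by
    have hmem : numRad (∑ i, (fun _ : Fin n => (0:ℂ)) i • T i) ∈ B := by
      refine ⟨fun _ => 0, by simpa using zero_lt_one, rfl⟩
    have := le_csSup bddB hmem
    exact le_trans (aux_numRad_nonneg _) this
  have hC0 : 0 ≤ sSup C := by
    have hmem : (0:ℝ) ∈ C := by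
      refine ⟨fun _ => 0, by simpa using zero_lt_one, by simp⟩
    exact le_csSup bddC hmem
  -- Claim 1 : sSup A = sSup B
  have claim1 : sSup A = sSup B := by
    apply le_antisymm
    · refine Real.sSup_le (fun x hx => ?_) hB0
      obtain ⟨h, hh, rfl⟩ := hx
      set a : Fin n → ℂ := fun j => inner ℂ ((T j) h) h with ha
      refine aux_le_of_forall_mul (Real.sqrt_nonneg _) fun r hr0 hr1 => ?_
      obtain ⟨l, hl, hval⟩ := aux_attain a hr0 hr1
      have hinner : (inner ℂ ((∑ i, l i • T i) h) h : ℂ) = ∑ i, conj (l i) * a i :=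
        aux_inner_sum T l h
      have step1 : r * Real.sqrt (∑ j, ‖a j‖ ^ 2) ≤ numRad (∑ i, l i • T i) := by
        rw [← hval, ← hinner]
        exact le_csSup (aux_numRad_bdd _) ⟨h, hh, rfl⟩
      exact step1.trans (le_csSup bddB ⟨l, hl, rfl⟩)
    · refine Real.sSup_le (fun x hx => ?_) hA0
      obtain ⟨l, hl, rfl⟩ := hx
      refine Real.sSup_le (fun y hy => ?_) hA0
      obtain ⟨h, hh, rfl⟩ := hy
      set a : Fin n → ℂ := fun j => inner ℂ ((T j) h) h with ha
      have hinner : (inner ℂ ((∑ i, l i • T i) h) h : ℂ) = ∑ i, conj (l i) * a i :=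
        aux_inner_sum T l h
      have hcs : ‖∑ i, conj (l i) * a i‖ ≤
          Real.sqrt (∑ i, ‖conj (l i)‖ ^ 2) * Real.sqrt (∑ i, ‖a i‖ ^ 2) :=
        aux_cs (fun i => conj (l i)) a
      have hconj : (∑ i, ‖conj (l i)‖ ^ 2) = ∑ i, ‖l i‖ ^ 2 := by
        refine Finset.sum_congr rfl fun i _ => by rw [RCLike.norm_conj]
      rw [hconj] at hcs
      have hsqrt1 : Real.sqrt (∑ i, ‖l i‖ ^ 2) ≤ 1 := by
        rw [show (1:ℝ) = Real.sqrt 1 by simp]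
        exact Real.sqrt_le_sqrt (le_of_lt hl)
      have hS0 : 0 ≤ Real.sqrt (∑ i, ‖a i‖ ^ 2) := Real.sqrt_nonneg _
      have : ‖(inner ℂ ((∑ i, l i • T i) h) h : ℂ)‖ ≤ Real.sqrt (∑ i, ‖a i‖ ^ 2) := by
        rw [hinner]
        refine hcs.trans ?_
        nlinarith
      refine this.trans (le_csSup bddA ⟨h, hh, rfl⟩)
  -- Claim 3 : sSup A ≤ sSup C
  have claim3 : sSup A ≤ sSup C := by
    refine Real.sSup_le (fun x hx => ?_) hC0
    obtain ⟨h, hh, rfl⟩ := hx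
    set a : Fin n → ℂ := fun j => inner ℂ ((T j) h) h with ha
    refine aux_le_of_forall_mul (Real.sqrt_nonneg _) fun r hr0 hr1 => ?_
    obtain ⟨l, hl, hval⟩ := aux_attain a hr0 hr1
    have hinner : (inner ℂ ((∑ i, l i • T i) h) h : ℂ) = ∑ i, conj (l i) * a i :=
      aux_inner_sum T l h
    have step1 : r * Real.sqrt (∑ j, ‖a j‖ ^ 2) ≤ ‖∑ i, l i • T i‖ := by
      rw [← hval, ← hinner]
      exact aux_inner_le_norm _ hh
    exact step1.trans (le_csSup bddC ⟨l, hl, rfl⟩)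
  -- Claim 2 : sSup C ≤ 2 * sSup A
  have claim2 : sSup C ≤ 2 * sSup A := by
    refine Real.sSup_le (fun x hx => ?_) (by linarith)
    obtain ⟨l, hl, rfl⟩ := hx
    have h1 : ‖∑ i, l i • T i‖ ≤ 2 * numRad (∑ i, l i • T i) :=
      aux_norm_le_two_numRad _
    have h2 : numRad (∑ i, l i • T i) ≤ sSup B := le_csSup bddB ⟨l, hl, rfl⟩
    rw [← claim1] at h2
    linarith
  refine ⟨claim1, ?_, claim3⟩
  rw [hRad, hNorm]
  linarith
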